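/- arXiv:2402.13825 — 2 statements merged into one kernel-verified Lean document; each statement's English description precedes it below -/
import Mathlib

section
/- Let p, q be positive integers with 2p ≤ q, and let A be any set of p+1 residues in ℤ/qℤ. Then A contains two elements r, s such that s − r ∈ {p, p+1, …, q−p} (mod q). -/
/-- rank of `x` in the finite set `V`: number of elements of `V` below `x`. -/
def stmt11rnk (V : Finset ℕ) (x : ℕ) : ℕ := (V.filter (fun u => u < x)).card

lemma stmt11rnk_lt (p : ℕ) (V : Finset ℕ) (hVcard : V.card = 2 * p) {x : ℕ} (hx : x ∈ V) :
    stmt11rnk V x < 2 * p := by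
  rw [← hVcard]
  refine Finset.card_lt_card ?_
  refine ⟨Finset.filter_subset _ _, fun hsub => ?_⟩
  have := hsub hx
  simp at this

lemma stmt11rnk_mono (V : Finset ℕ) {x y : ℕ} (hxy : x < y) (hx : x ∈ V) :
    stmt11rnk V x < stmt11rnk V y := by
  refine Finset.card_lt_card ?_
  constructor
  · intro u hu
    simp only [Finset.mem_filter] at hu ⊢
    exact ⟨hu.1, by omega⟩
  · intro hsub
    have := hsub (by simp only [Finset.mem_filter]; exact ⟨hx, hxy⟩)
    simp at this

lemma stmt11_main (p q : ℕ) (V : Finset ℕ) (hp : 1 ≤ p)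
    (hVcard : V.card = 2 * p) (hVlt : ∀ v ∈ V, v < q)
    {x y : ℕ} (hx : x ∈ V) (hy : y ∈ V) (hr : stmt11rnk V x + p = stmt11rnk V y) :
    x < y ∧ p ≤ y - x ∧ y + p ≤ x + q := by
  have hxlty : x < y := by
    rcases Nat.lt_trichotomy x y with h | h | h
    · exact h
    · subst h; omega
    · have := stmt11rnk_mono V h hy; omega
  have hsplit : V.filter (fun u => u < y)
      = V.filter (fun u => u < x) ∪ V.filter (fun u => x ≤ u ∧ u < y) := by
    ext u
    simp only [Finset.mem_filter, Finset.mem_union]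
    constructor
    · rintro ⟨hu, h2⟩
      by_cases hc : u < x
      · exact Or.inl ⟨hu, hc⟩
      · exact Or.inr ⟨hu, by omega, h2⟩
    · rintro (⟨hu, h2⟩ | ⟨hu, h2, h3⟩) <;> exact ⟨hu, by omega⟩
  have hdisj : Disjoint (V.filter (fun u => u < x)) (V.filter (fun u => x ≤ u ∧ u < y)) := by
    rw [Finset.disjoint_left]
    intro u hu1 hu2
    simp only [Finset.mem_filter] at hu1 hu2
    omega
  have hmidcard : (V.filter (fun u => x ≤ u ∧ u < y)).card = p := by
    have h2 := Finset.card_union_of_disjoint hdisj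
    rw [← hsplit] at h2
    have h1 : stmt11rnk V y = stmt11rnk V x + (V.filter (fun u => x ≤ u ∧ u < y)).card := h2
    omega
  have hmid_sub : V.filter (fun u => x ≤ u ∧ u < y) ⊆ Finset.Ico x y := by
    intro u hu
    simp only [Finset.mem_filter] at hu
    simp only [Finset.mem_Ico]
    omega
  have hlow : p ≤ y - x := by
    have := Finset.card_le_card hmid_sub
    rw [hmidcard, Nat.card_Ico] at this
    exact this
  have hsplit2 : V = V.filter (fun u => u < y) ∪ V.filter (fun u => y ≤ u) := by
    ext u
    simp only [Finset.mem_filter, Finset.mem_union]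
    constructor
    · intro hu
      by_cases hc : u < y
      · exact Or.inl ⟨hu, hc⟩
      · exact Or.inr ⟨hu, by omega⟩
    · rintro (⟨hu, _⟩ | ⟨hu, _⟩) <;> exact hu
  have hdisj2 : Disjoint (V.filter (fun u => u < y)) (V.filter (fun u => y ≤ u)) := by
    rw [Finset.disjoint_left]
    intro u hu1 hu2
    simp only [Finset.mem_filter] at hu1 hu2
    omega
  have htopcard : stmt11rnk V y + (V.filter (fun u => y ≤ u)).card = 2 * p := by
    have h2 := Finset.card_union_of_disjoint hdisj2
    rw [← hsplit2, hVcard] at h2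
    have h1 : 2 * p = stmt11rnk V y + (V.filter (fun u => y ≤ u)).card := h2
    omega
  have htop_sub : V.filter (fun u => y ≤ u) ⊆ Finset.Ico y q := by
    intro u hu
    simp only [Finset.mem_filter] at hu
    simp only [Finset.mem_Ico]
    exact ⟨hu.2, hVlt u hu.1⟩
  have htop : (V.filter (fun u => y ≤ u)).card ≤ q - y := by
    have := Finset.card_le_card htop_sub
    rwa [Nat.card_Ico] at this
  have hbot : stmt11rnk V x ≤ x := by
    have hsub : V.filter (fun u => u < x) ⊆ Finset.range x := by
      intro u hu
      simp only [Finset.mem_filter] at hu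
      simp only [Finset.mem_range]
      exact hu.2
    have := Finset.card_le_card hsub
    rwa [Finset.card_range] at this
  have hyq : y < q := hVlt y hy
  exact ⟨hxlty, hlow, by omega⟩

theorem stmt_11 (p q : ℕ) [NeZero q] (hp : 1 ≤ p) (hq : 2 * p ≤ q)
    (A : Finset (ZMod q)) (hA : A.card = p + 1) :
    ∃ r ∈ A, ∃ s ∈ A, (s - r).val ∈ Finset.Icc p (q - p) := by
  classical
  have hq0 : 0 < q := Nat.pos_of_ne_zero (NeZero.ne q)
  obtain ⟨P, hAP, hPcard⟩ : ∃ P : Finset (ZMod q), A ⊆ P ∧ P.card = 2 * p := by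
    refine Finset.exists_superset_card_eq ?_ ?_
    · omega
    · rw [ZMod.card]; exact hq
  have hval_inj : Function.Injective (ZMod.val : ZMod q → ℕ) := ZMod.val_injective q
  have hVcard : (P.image ZMod.val).card = 2 * p := by
    rw [Finset.card_image_of_injective _ hval_inj, hPcard]
  have hVlt : ∀ v ∈ P.image ZMod.val, v < q := by
    intro v hv
    rw [Finset.mem_image] at hv
    obtain ⟨z, _, rfl⟩ := hv
    exact ZMod.val_lt z
  have hmemV : ∀ a ∈ A, (ZMod.val a) ∈ P.image ZMod.val := by
    intro a ha
    exact Finset.mem_image_of_mem _ (hAP ha)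
  -- the main step given two elements whose ranks differ by exactly p
  have main : ∀ a ∈ A, ∀ b ∈ A,
      stmt11rnk (P.image ZMod.val) a.val + p = stmt11rnk (P.image ZMod.val) b.val →
      ∃ r ∈ A, ∃ s ∈ A, (s - r).val ∈ Finset.Icc p (q - p) := by
    intro a ha b hb hrab
    obtain ⟨hxlty, hlow, hup⟩ :=
      stmt11_main p q (P.image ZMod.val) hp hVcard hVlt (hmemV a ha) (hmemV b hb) hrab
    have hyq : b.val < q := ZMod.val_lt b
    have hcast : b - a = ((b.val - a.val : ℕ) : ZMod q) := by
      have ha' : ((a.val : ℕ) : ZMod q) = a := ZMod.natCast_rightInverse a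
      have hb' : ((b.val : ℕ) : ZMod q) = b := ZMod.natCast_rightInverse b
      rw [Nat.cast_sub (le_of_lt hxlty), ha', hb']
    have hval : (b - a).val = b.val - a.val := by
      rw [hcast, ZMod.val_natCast, Nat.mod_eq_of_lt (by omega)]
    refine ⟨a, ha, b, hb, ?_⟩
    rw [hval, Finset.mem_Icc]
    omega
  -- pigeonhole on ranks mod p
  obtain ⟨a, ha, b, hb, hab, habm⟩ :
      ∃ a ∈ A, ∃ b ∈ A, a ≠ b ∧
        stmt11rnk (P.image ZMod.val) a.val % p = stmt11rnk (P.image ZMod.val) b.val % p := by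
    have hcard : (Finset.range p).card < A.card := by
      rw [hA, Finset.card_range]; omega
    have hmaps : ∀ a ∈ A, stmt11rnk (P.image ZMod.val) a.val % p ∈ Finset.range p := by
      intro a _
      simp only [Finset.mem_range]
      exact Nat.mod_lt _ (by omega)
    obtain ⟨a, ha, b, hb, hab, habm⟩ :=
      Finset.exists_ne_map_eq_of_card_lt_of_maps_to hcard hmaps
    exact ⟨a, ha, b, hb, hab, habm⟩
  have key : ∀ u v : ℕ, u < 2 * p → v < 2 * p → u < v → u % p = v % p → v = u + p := by
    intro u v hu hv huv hm
    have hdvd : p ∣ v - u := (Nat.modEq_iff_dvd' (le_of_lt huv)).mp hm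
    obtain ⟨k, hk⟩ := hdvd
    have hk0 : k ≠ 0 := by
      intro h; rw [h, Nat.mul_zero] at hk; omega
    have hk2 : k < 2 := by
      by_contra h
      push_neg at h
      have : 2 * p ≤ p * k := by
        calc 2 * p = p * 2 := by ring
        _ ≤ p * k := Nat.mul_le_mul_left p h
      omega
    have : k = 1 := by omega
    rw [this, Nat.mul_one] at hk
    omega
  rcases Nat.lt_trichotomy a.val b.val with hlt | heq | hlt'
  · have h1 := stmt11rnk_mono (P.image ZMod.val) hlt (hmemV a ha)
    have := key _ _ (stmt11rnk_lt p _ hVcard (hmemV a ha))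
      (stmt11rnk_lt p _ hVcard (hmemV b hb)) h1 habm
    exact main a ha b hb (by omega)
  · exact absurd (hval_inj heq) hab
  · have h1 := stmt11rnk_mono (P.image ZMod.val) hlt' (hmemV b hb)
    have := key _ _ (stmt11rnk_lt p _ hVcard (hmemV b hb))
      (stmt11rnk_lt p _ hVcard (hmemV a ha)) h1 habm.symm
    exact main b hb a ha (by omega)
end

section
/- Let q ≥ 2 and μ > 0, and let ζ = e^{2πi/q}. Define K = {z ∈ ℂ : |z| ≤ 1 and |Im(ζ^s·z)| ≤ 3μ for some s ∈ ℤ/qℤ}. Then any two points of the closed unit disc lying outside K and in different connected components of (closed unit disc) \ K have distance at least 6μ. -/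
open Complex

lemma seg_im_bound (μ a b x y : ℝ) (ha : 0 ≤ a) (hb : 0 ≤ b) (hab : a + b = 1)
    (hx : 3 * μ < |x|) (hy : 3 * μ < |y|) (hxy : |x - y| < 6 * μ) :
    3 * μ < |a * x + b * y| := by
  have hxy' := abs_lt.mp hxy
  rcases lt_abs.mp hx with hx' | hx'
  · have hy' : 3 * μ < y := by
      rcases lt_abs.mp hy with h | h
      · exact h
      · linarith [hxy'.2]
    refine lt_abs.mpr (Or.inl ?_)
    rcases eq_or_lt_of_le ha with h | h
    · have hb1 : b = 1 := by linarith
      rw [← h, hb1]; simpa using hy'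
    · nlinarith
  · have hy' : 3 * μ < -y := by
      rcases lt_abs.mp hy with h | h
      · linarith [hxy'.1]
      · exact h
    refine lt_abs.mpr (Or.inr ?_)
    rcases eq_or_lt_of_le ha with h | h
    · have hb1 : b = 1 := by linarith
      rw [← h, hb1]; simpa using hy'
    · nlinarith

theorem stmt_13 (q : ℕ) [NeZero q] (hq : 2 ≤ q) (μ : ℝ) (hμ : 0 < μ)
    (ζ : ℂ) (hζ : ζ = Complex.exp (2 * Real.pi * Complex.I / q))
    (K : Set ℂ)
    (hK : K = {z : ℂ | ‖z‖ ≤ 1 ∧ ∃ s : ZMod q, |(ζ ^ s.val * z).im| ≤ 3 * μ})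
    (z zstar : ℂ) (hz : ‖z‖ ≤ 1) (hzstar : ‖zstar‖ ≤ 1)
    (hzK : z ∉ K) (hzstarK : zstar ∉ K)
    (hcomp : connectedComponentIn ({w : ℂ | ‖w‖ ≤ 1} \ K) z ≠
             connectedComponentIn ({w : ℂ | ‖w‖ ≤ 1} \ K) zstar) :
    6 * μ ≤ ‖z - zstar‖ := by
  by_contra hcon
  push_neg at hcon
  have habsζ : ∀ n : ℕ, ‖ζ ^ n‖ = 1 := by
    intro n
    have h1 : ‖ζ‖ = 1 := by
      rw [hζ]
      have : (2 * Real.pi * Complex.I / q) = ((2 * Real.pi / q : ℝ) : ℂ) * Complex.I := by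
        push_cast; ring
      rw [this, Complex.norm_exp_ofReal_mul_I]
    rw [norm_pow, h1, one_pow]
  have hz' : ∀ s : ZMod q, 3 * μ < |(ζ ^ s.val * z).im| := by
    intro s
    by_contra h
    push_neg at h
    exact hzK (by rw [hK]; exact ⟨hz, s, h⟩)
  have hzstar' : ∀ s : ZMod q, 3 * μ < |(ζ ^ s.val * zstar).im| := by
    intro s
    by_contra h
    push_neg at h
    exact hzstarK (by rw [hK]; exact ⟨hzstar, s, h⟩)
  set F : Set ℂ := {w : ℂ | ‖w‖ ≤ 1} \ K with hF
  have hseg : segment ℝ z zstar ⊆ F := by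
    rintro w ⟨a, b, ha, hb, hab, rfl⟩
    constructor
    · show ‖a • z + b • zstar‖ ≤ 1
      calc ‖a • z + b • zstar‖
          ≤ ‖a • z‖ + ‖b • zstar‖ := norm_add_le _ _
        _ = a * ‖z‖ + b * ‖zstar‖ := by
            rw [Complex.real_smul, Complex.real_smul, norm_mul, norm_mul]
            simp [Complex.norm_real, _root_.abs_of_nonneg ha, _root_.abs_of_nonneg hb]
        _ ≤ a * 1 + b * 1 := by
            gcongr
        _ = 1 := by linarith
    · intro hw
      rw [hK] at hw
      obtain ⟨_, s, hs⟩ := hw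
      have him : (ζ ^ s.val * (a • z + b • zstar)).im
          = a * (ζ ^ s.val * z).im + b * (ζ ^ s.val * zstar).im := by
        have heq : ζ ^ s.val * ((a : ℂ) * z + (b : ℂ) * zstar)
            = (a : ℂ) * (ζ ^ s.val * z) + (b : ℂ) * (ζ ^ s.val * zstar) := by ring
        rw [Complex.real_smul, Complex.real_smul, heq]
        simp [Complex.add_im, Complex.mul_im, Complex.ofReal_re, Complex.ofReal_im]
      have hdiff : |(ζ ^ s.val * z).im - (ζ ^ s.val * zstar).im| < 6 * μ := by
        have h1 : (ζ ^ s.val * z).im - (ζ ^ s.val * zstar).im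
            = (ζ ^ s.val * (z - zstar)).im := by
          rw [mul_sub, Complex.sub_im]
        rw [h1]
        calc |(ζ ^ s.val * (z - zstar)).im| ≤ ‖ζ ^ s.val * (z - zstar)‖ :=
              Complex.abs_im_le_norm _
          _ = ‖z - zstar‖ := by rw [norm_mul, habsζ, one_mul]
          _ < 6 * μ := hcon
      have := seg_im_bound μ a b _ _ ha hb hab (hz' s) (hzstar' s) hdiff
      rw [him] at hs
      linarith
  have hconn : IsPreconnected (segment ℝ z zstar) := (convex_segment z zstar).isPreconnected
  have hsub := hconn.subset_connectedComponentIn (left_mem_segment ℝ z zstar) hseg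
  have hmem : zstar ∈ connectedComponentIn F z := hsub (right_mem_segment ℝ z zstar)
  exact hcomp (connectedComponentIn_eq hmem)
end
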